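/- (Lower bound on convergence.) There is a universal constant C > 0 with the following property. Let Z and ξ be independent standard Gaussian random variables, and let the label satisfy y | Z ~ Bernoulli(σ(Z)), so the Bayes-optimal logit is Z itself with loss L(Z) = E[−σ(Z)·Z + log(1 + e^{Z})]. For every integer p ≥ 1, let ẑ minimize the expected BCE loss L(z) = E[−σ(Z)·z + log(1 + e^{z})] over all logits of the form z = c(Z + ξ/√p), c ∈ ℝ (the minimizer exists). Then the excess loss satisfies L(ẑ) − L(Z) ≥ C/(p+1). -/

import Mathlib

/-!
Write `ℓ_z(t) = -σ(z) t + log (1 + eᵗ)` and `W = Z + ξ/√p`. The excess loss of `c W` is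
`E[ℓ_Z(c W) - ℓ_Z(Z)]`, the integral of a nonnegative function against the law `γ ⊗ γ` of
`(Z, ξ)`. Since `ℓ_z'' = σ(1 - σ) ≥ κ := σ'(4)` on `[-4, 4]`, the integrand is at least
`κ/2 (cW - Z)²` when `Z` and `cW` lie in `[-4, 4]`, and at least `κ/2` when `|cW - Z| ≥ 1`
(`ℓ_z` increases away from `z`). If `|c| ≤ 2`, restricting to `|Z|, |ξ| ≤ 1`, where the cross
term vanishes by symmetry, bounds the excess below by a multiple of
`(c - 1)² + c²/p ≥ 1/(p + 1)`: bias against variance, balanced at `c = p/(p + 1)`.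
If `|c| > 2`, the logit overshoots by at least `1` on `Z ∈ [1, 2], ξ ∈ [0, 1]`.
-/

open MeasureTheory ProbabilityTheory

/-- The sigmoid (logistic) function `σ(z) = 1 / (1 + e^{-z})`. -/
noncomputable def sigmoid (z : ℝ) : ℝ := 1 / (1 + Real.exp (-z))

/-- Expected BCE loss against soft labels `σ(Z)`: with `y | Z ~ Bernoulli(σ(Z))`, the
expected BCE loss of a logit random variable `f` is `L(f) = E[−σ(Z)·f + log(1+e^f)]`. -/
noncomputable def softLoss {Ω : Type*} [MeasurableSpace Ω] (P : Measure Ω)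
    (Z f : Ω → ℝ) : ℝ :=
  ∫ ω, (-(sigmoid (Z ω)) * f ω + Real.log (1 + Real.exp (f ω))) ∂P

open Set

lemma sigmoid_eq_real_sigmoid : sigmoid = Real.sigmoid := funext fun _ => one_div _

noncomputable def logisticLoss (z t : ℝ) : ℝ := -(sigmoid z) * t + Real.log (1 + Real.exp t)

lemma hasDerivAt_log_one_add_exp (t : ℝ) :
    HasDerivAt (fun t => Real.log (1 + Real.exp t)) (Real.sigmoid t) t := by
  convert ((Real.hasDerivAt_exp t).const_add 1).log (by positivity) using 1
  rw [Real.sigmoid_def, Real.exp_neg]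
  field_simp
  ring

lemma hasDerivAt_logisticLoss (z t : ℝ) :
    HasDerivAt (logisticLoss z) (Real.sigmoid t - Real.sigmoid z) t :=
  (((hasDerivAt_id' t).const_mul (-sigmoid z)).fun_add
    (hasDerivAt_log_one_add_exp t)).congr_deriv (by rw [sigmoid_eq_real_sigmoid]; ring)

lemma continuous_logisticLoss : Continuous (Function.uncurry logisticLoss) :=
  (((sigmoid_eq_real_sigmoid ▸ continuous_sigmoid : Continuous sigmoid).comp
    continuous_fst).neg.mul continuous_snd).add
    (Continuous.log (by fun_prop) fun _ => by positivity)

lemma abs_logisticLoss_le (z t : ℝ) : |logisticLoss z t| ≤ 2 * |t| + Real.log 2 := by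
  have hσ : |-(sigmoid z) * t| ≤ |t| := by
    rw [sigmoid_eq_real_sigmoid, abs_mul, abs_neg, abs_of_pos (Real.sigmoid_pos z)]
    exact mul_le_of_le_one_left (abs_nonneg t) (Real.sigmoid_le_one z)
  have hlog : |Real.log (1 + Real.exp t)| ≤ Real.log 2 + |t| := by
    rw [abs_of_nonneg (Real.log_nonneg (by linarith [Real.exp_pos t])), ← Real.log_exp |t|,
      ← Real.log_mul two_ne_zero (Real.exp_pos _).ne']
    refine Real.log_le_log (by positivity) ?_
    linarith [Real.exp_le_exp.2 (le_abs_self t), Real.one_le_exp (abs_nonneg t)]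
  calc |logisticLoss z t| ≤ |-(sigmoid z) * t| + |Real.log (1 + Real.exp t)| := abs_add_le _ _
    _ ≤ 2 * |t| + Real.log 2 := by linarith

lemma le_of_forall_deriv_mul_sub_nonneg {f f' : ℝ → ℝ} {a b : ℝ}
    (hf : ∀ x ∈ uIcc a b, HasDerivAt f (f' x) x) (hf' : ∀ x ∈ uIcc a b, 0 ≤ f' x * (x - a)) :
    f a ≤ f b := by
  have hcont : ContinuousOn f (uIcc a b) := fun x hx =>
    (hf x hx).continuousAt.continuousWithinAt
  rcases le_total a b with hab | hba
  · rw [uIcc_of_le hab] at hf hf' hcont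
    refine monotoneOn_of_hasDerivWithinAt_nonneg (f' := f') (convex_Icc a b) hcont
      (fun x hx => ?_) (fun x hx => ?_) (left_mem_Icc.2 hab) (right_mem_Icc.2 hab) hab <;>
      rw [interior_Icc] at hx
    · exact (hf x (Ioo_subset_Icc_self hx)).hasDerivWithinAt
    · exact nonneg_of_mul_nonneg_left (hf' x (Ioo_subset_Icc_self hx)) (sub_pos.2 hx.1)
  · rw [uIcc_of_ge hba] at hf hf' hcont
    refine antitoneOn_of_hasDerivWithinAt_nonpos (f' := f') (convex_Icc b a) hcont
      (fun x hx => ?_) (fun x hx => ?_) (left_mem_Icc.2 hba) (right_mem_Icc.2 hba) hba <;>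
      rw [interior_Icc] at hx
    · exact (hf x (Ioo_subset_Icc_self hx)).hasDerivWithinAt
    · exact nonpos_of_mul_nonneg_left (hf' x (Ioo_subset_Icc_self hx)) (sub_neg.2 hx.2)

lemma sigmoid_mul_one_sub_sigmoid (t : ℝ) :
    Real.sigmoid t * (1 - Real.sigmoid t) = (2 + 2 * Real.cosh t)⁻¹ := by
  rw [← Real.sigmoid_neg, Real.sigmoid_def, Real.sigmoid_def, neg_neg, Real.cosh_eq]
  have : Real.exp t * Real.exp (-t) = 1 := by rw [← Real.exp_add, add_neg_cancel, Real.exp_zero]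
  field_simp
  linear_combination -this

noncomputable def curvatureLowerBound : ℝ := (2 + 2 * Real.cosh 4)⁻¹

lemma curvatureLowerBound_pos : 0 < curvatureLowerBound := by
  unfold curvatureLowerBound; positivity

lemma curvatureLowerBound_le {t : ℝ} (ht : t ∈ Icc (-4) 4) :
    curvatureLowerBound ≤ Real.sigmoid t * (1 - Real.sigmoid t) := by
  rw [sigmoid_mul_one_sub_sigmoid, curvatureLowerBound]
  gcongr
  rw [Real.cosh_le_cosh, abs_of_pos (by norm_num : (0:ℝ) < 4)]
  exact abs_le.2 ht

lemma monotoneOn_sigmoid_sub_mul :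
    MonotoneOn (fun s => Real.sigmoid s - curvatureLowerBound * s) (Icc (-4) 4) := by
  have hderiv (x : ℝ) : HasDerivAt (fun s => Real.sigmoid s - curvatureLowerBound * s)
      (Real.sigmoid x * (1 - Real.sigmoid x) - curvatureLowerBound) x :=
    ((Real.hasDerivAt_sigmoid x).fun_sub
      ((hasDerivAt_id' x).const_mul curvatureLowerBound)).congr_deriv (by ring)
  refine monotoneOn_of_hasDerivWithinAt_nonneg (convex_Icc _ _)
    (fun x _ => (hderiv x).continuousAt.continuousWithinAt)
    (fun x _ => (hderiv x).hasDerivWithinAt) fun x hx => ?_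
  rw [interior_Icc] at hx
  linarith [curvatureLowerBound_le (Ioo_subset_Icc_self hx)]

lemma logisticLoss_le_of_mem_uIcc {z w t : ℝ} (hw : w ∈ uIcc z t) :
    logisticLoss z w ≤ logisticLoss z t := by
  refine le_of_forall_deriv_mul_sub_nonneg (fun x _ => hasDerivAt_logisticLoss z x) fun x hx => ?_
  rcases le_total z t with hzt | htz
  · rw [uIcc_of_le hzt] at hw
    rw [uIcc_of_le hw.2] at hx
    exact mul_nonneg (sub_nonneg.2 (Real.sigmoid_le (hw.1.trans hx.1))) (sub_nonneg.2 hx.1)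
  · rw [uIcc_of_ge htz] at hw
    rw [uIcc_of_ge hw.1] at hx
    exact mul_nonneg_of_nonpos_of_nonpos (sub_nonpos.2 (Real.sigmoid_le (hx.2.trans hw.2)))
      (sub_nonpos.2 hx.2)

lemma logisticLoss_self_le (z t : ℝ) : logisticLoss z z ≤ logisticLoss z t :=
  logisticLoss_le_of_mem_uIcc left_mem_uIcc

lemma logisticLoss_self_add_sq_le {z t : ℝ} (hz : z ∈ Icc (-4) 4) (ht : t ∈ Icc (-4) 4) :
    logisticLoss z z + curvatureLowerBound / 2 * (t - z) ^ 2 ≤ logisticLoss z t := by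
  set u := fun s => Real.sigmoid s - curvatureLowerBound * s
  have hderiv (x : ℝ) :
      HasDerivAt (fun s => logisticLoss z s - curvatureLowerBound / 2 * (s - z) ^ 2)
        (u x - u z) x :=
    ((hasDerivAt_logisticLoss z x).fun_sub ((((hasDerivAt_id' x).sub_const z).pow 2).const_mul
      (curvatureLowerBound / 2))).congr_deriv (by simp only [u]; norm_num; ring)
  have key : logisticLoss z z - curvatureLowerBound / 2 * (z - z) ^ 2
      ≤ logisticLoss z t - curvatureLowerBound / 2 * (t - z) ^ 2 :=
    le_of_forall_deriv_mul_sub_nonneg (fun x _ => hderiv x) fun x hx =>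
      (monovaryOn_id_iff.2 monotoneOn_sigmoid_sub_mul).sub_mul_sub_nonneg hz
        (uIcc_subset_Icc hz ht hx)
  rw [sub_self, zero_pow two_ne_zero, mul_zero, sub_zero] at key
  linarith

lemma logisticLoss_self_add_le_of_one_le_abs_sub {z t : ℝ} (hz : z ∈ Icc (-3) 3)
    (ht : 1 ≤ |t - z|) :
    logisticLoss z z + curvatureLowerBound / 2 ≤ logisticLoss z t := by
  obtain ⟨w, hw, hwz, hw4⟩ : ∃ w ∈ uIcc z t, (w - z) ^ 2 = 1 ∧ w ∈ Icc (-4) 4 := by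
    rcases le_abs'.1 ht with h | h
    · exact ⟨z - 1, by rw [uIcc_of_ge (by linarith)]; constructor <;> linarith, by ring,
        by constructor <;> linarith [hz.1, hz.2]⟩
    · exact ⟨z + 1, by rw [uIcc_of_le (by linarith)]; constructor <;> linarith, by ring,
        by constructor <;> linarith [hz.1, hz.2]⟩
  have hquad := logisticLoss_self_add_sq_le (Icc_subset_Icc (by norm_num) (by norm_num) hz) hw4
  rw [hwz, mul_one] at hquad
  exact hquad.trans (logisticLoss_le_of_mem_uIcc hw)

local notation "γ" => gaussianReal 0 1

lemma integral_prod_sq_add {μ ν : Measure ℝ} [IsFiniteMeasure μ] [IsFiniteMeasure ν]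
    (hμ : MemLp id 2 μ) (hν : MemLp id 2 ν) (hμ₀ : ∫ x, x ∂μ = 0) (a b : ℝ) :
    ∫ q, (a * q.1 + b * q.2) ^ 2 ∂μ.prod ν
      = a ^ 2 * (∫ x, x ^ 2 ∂μ) * ν.real univ + b ^ 2 * μ.real univ * ∫ y, y ^ 2 ∂ν := by
  have h₁ : Integrable (fun q : ℝ × ℝ => a ^ 2 * q.1 ^ 2 * 1) (μ.prod ν) :=
    (hμ.integrable_sq.const_mul _).mul_prod (integrable_const 1)
  have h₂ : Integrable (fun q : ℝ × ℝ => 2 * a * b * q.1 * q.2) (μ.prod ν) :=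
    ((hμ.integrable one_le_two).const_mul _).mul_prod (hν.integrable one_le_two)
  have h₃ : Integrable (fun q : ℝ × ℝ => 1 * (b ^ 2 * q.2 ^ 2)) (μ.prod ν) :=
    (integrable_const 1).mul_prod (hν.integrable_sq.const_mul _)
  have e₁ : ∫ q, a ^ 2 * q.1 ^ 2 * 1 ∂μ.prod ν = (∫ x, a ^ 2 * x ^ 2 ∂μ) * ∫ _, 1 ∂ν :=
    integral_prod_mul (fun x => a ^ 2 * x ^ 2) (fun _ => 1)
  have e₂ : ∫ q, 2 * a * b * q.1 * q.2 ∂μ.prod ν = (∫ x, 2 * a * b * x ∂μ) * ∫ y, y ∂ν :=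
    integral_prod_mul (fun x => 2 * a * b * x) id
  have e₃ : ∫ q, 1 * (b ^ 2 * q.2 ^ 2) ∂μ.prod ν = (∫ _, 1 ∂μ) * ∫ y, b ^ 2 * y ^ 2 ∂ν :=
    integral_prod_mul (fun _ => 1) (fun y => b ^ 2 * y ^ 2)
  calc ∫ q, (a * q.1 + b * q.2) ^ 2 ∂μ.prod ν
      = ∫ q, (a ^ 2 * q.1 ^ 2 * 1 + 2 * a * b * q.1 * q.2) + 1 * (b ^ 2 * q.2 ^ 2) ∂μ.prod ν :=
        integral_congr_ae (ae_of_all _ fun q => by ring)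
    _ = _ := by
        rw [integral_add (h₁.fun_add h₂) h₃, integral_add h₁ h₂, e₁, e₂, e₃, integral_const_mul,
          integral_const_mul, integral_const_mul, hμ₀, integral_const, integral_const, smul_eq_mul,
          smul_eq_mul]
        ring

lemma integral_id_eq_zero_of_map_neg_eq {μ : Measure ℝ} (h : μ.map Neg.neg = μ) :
    ∫ x, x ∂μ = 0 := by
  have : μ.IsNegInvariant := ⟨h⟩
  have hneg := integral_neg_eq_self id μ
  simp only [id] at hneg
  rw [integral_neg] at hneg
  linarith

lemma map_neg_restrict_gaussianReal_Icc (r : ℝ) :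
    (Measure.restrict γ (Icc (-r) r)).map Neg.neg = Measure.restrict γ (Icc (-r) r) := by
  conv_lhs => rw [show Icc (-r) r = Neg.neg ⁻¹' Icc (-r) r by simp [neg_neg]]
  rw [← Measure.restrict_map measurable_neg measurableSet_Icc, gaussianReal_map_neg, neg_zero]

lemma gaussianReal_Ioo_pos {a b : ℝ} (hab : a < b) : 0 < γ (Ioo a b) :=
  have := (gaussianReal_absolutelyContinuous' 0 one_ne_zero).isOpenPosMeasure
  (Measure.measure_Ioo_pos _).2 hab

lemma measureReal_gaussianReal_Icc_pos {a b : ℝ} (hab : a < b) :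
    0 < Measure.real γ (Icc a b) :=
  ENNReal.toReal_pos
    ((gaussianReal_Ioo_pos hab).trans_le (measure_mono Ioo_subset_Icc_self)).ne'
    (measure_ne_top _ _)

lemma setIntegral_sq_gaussianReal_pos : 0 < ∫ x in Icc (-1) 1, x ^ 2 ∂γ := by
  rw [setIntegral_pos_iff_support_of_nonneg_ae (ae_of_all _ fun x => sq_nonneg x)
    ((memLp_id_gaussianReal 2).integrable_sq.integrableOn)]
  refine (gaussianReal_Ioo_pos (by norm_num : (0 : ℝ) < 1)).trans_le
    (measure_mono fun x hx => ?_)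
  exact ⟨pow_ne_zero 2 hx.1.ne', by linarith [hx.1], hx.2.le⟩

/-- `q` stands for `(Z, ξ)` and `s` for `√p`. -/
noncomputable def excessLoss (c s : ℝ) (q : ℝ × ℝ) : ℝ :=
  logisticLoss q.1 (c * (q.1 + q.2 / s)) - logisticLoss q.1 q.1

lemma excessLoss_nonneg (c s : ℝ) (q : ℝ × ℝ) : 0 ≤ excessLoss c s q :=
  sub_nonneg.2 (logisticLoss_self_le _ _)

lemma integrable_logisticLoss {α : Type*} [MeasurableSpace α] {μ : Measure α}
    [IsFiniteMeasure μ] {X T : α → ℝ} (hX : AEStronglyMeasurable X μ) (hT : Integrable T μ) :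
    Integrable (fun a => logisticLoss (X a) (T a)) μ :=
  ((hT.abs.const_mul 2).fun_add (integrable_const (Real.log 2))).mono'
    (continuous_logisticLoss.comp_aestronglyMeasurable₂ hX hT.1)
    (ae_of_all _ fun a => by
      simpa only [Real.norm_eq_abs] using abs_logisticLoss_le (X a) (T a))

lemma integrable_fst_gaussianReal_prod :
    Integrable (fun q : ℝ × ℝ => q.1) (Measure.prod γ γ) :=
  IsGaussian.integrable_id.comp_fst _

lemma integrable_logisticLoss_prod (c s : ℝ) :
    Integrable (fun q : ℝ × ℝ => logisticLoss q.1 (c * (q.1 + q.2 / s))) (Measure.prod γ γ) :=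
  integrable_logisticLoss integrable_fst_gaussianReal_prod.1
    ((integrable_fst_gaussianReal_prod.add
      ((IsGaussian.integrable_id.comp_snd _).div_const s)).const_mul c)

lemma integrable_logisticLoss_self_prod :
    Integrable (fun q : ℝ × ℝ => logisticLoss q.1 q.1) (Measure.prod γ γ) :=
  integrable_logisticLoss integrable_fst_gaussianReal_prod.1 integrable_fst_gaussianReal_prod

lemma integrable_excessLoss (c s : ℝ) : Integrable (excessLoss c s) (Measure.prod γ γ) :=
  (integrable_logisticLoss_prod c s).sub integrable_logisticLoss_self_prod

lemma softLoss_sub_softLoss_eq_integral_excessLoss {Ω : Type*} [MeasurableSpace Ω]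
    {P : Measure Ω} [IsProbabilityMeasure P] {Z ξ : Ω → ℝ} (hZ : HasLaw Z γ P)
    (hξ : HasLaw ξ γ P) (hZξ : IndepFun Z ξ P) (c s : ℝ) :
    softLoss P Z (fun ω => c * (Z ω + ξ ω / s)) - softLoss P Z Z
      = ∫ q, excessLoss c s q ∂Measure.prod γ γ := by
  have hpair := hZξ.hasLaw_prod hZ hξ
  have h₁ : softLoss P Z (fun ω => c * (Z ω + ξ ω / s))
      = ∫ q, logisticLoss q.1 (c * (q.1 + q.2 / s)) ∂Measure.prod γ γ :=
    hpair.integral_comp (integrable_logisticLoss_prod c s).1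
  have h₀ : softLoss P Z Z = ∫ q, logisticLoss q.1 q.1 ∂Measure.prod γ γ :=
    hpair.integral_comp integrable_logisticLoss_self_prod.1
  rw [h₁, h₀,
    ← integral_sub (integrable_logisticLoss_prod c s) integrable_logisticLoss_self_prod]
  rfl

lemma mul_sq_le_excessLoss {c s : ℝ} (hc : |c| ≤ 2) (hs : 1 ≤ s) {q : ℝ × ℝ}
    (hq : q ∈ Icc (-1) 1 ×ˢ Icc (-1) 1) :
    curvatureLowerBound / 2 * ((c - 1) * q.1 + c / s * q.2) ^ 2 ≤ excessLoss c s q := by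
  obtain ⟨hx, hy⟩ := hq
  have hx' : |q.1| ≤ 1 := abs_le.2 hx
  have hy' : |q.2 / s| ≤ 1 := by
    rw [abs_div, abs_of_pos (by linarith : 0 < s), div_le_one (by linarith : 0 < s)]
    linarith [abs_le.2 hy]
  have ht : |c * (q.1 + q.2 / s)| ≤ 4 := by
    rw [abs_mul]
    nlinarith [abs_add_le q.1 (q.2 / s), abs_nonneg c, abs_nonneg (q.1 + q.2 / s)]
  have hquad := logisticLoss_self_add_sq_le (Icc_subset_Icc (by norm_num) (by norm_num) hx)
    (abs_le.1 ht)
  rw [show c * (q.1 + q.2 / s) - q.1 = (c - 1) * q.1 + c / s * q.2 by ring] at hquad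
  unfold excessLoss
  linarith

lemma div_two_le_excessLoss {c s : ℝ} (hc : 2 < |c|) (hs : 0 < s) {q : ℝ × ℝ}
    (hq : q ∈ Icc 1 2 ×ˢ Icc 0 1) : curvatureLowerBound / 2 ≤ excessLoss c s q := by
  obtain ⟨hx, hy⟩ := hq
  have hW : q.1 ≤ q.1 + q.2 / s := le_add_of_nonneg_right (div_nonneg hy.1 hs.le)
  have hfar : 1 ≤ |c * (q.1 + q.2 / s) - q.1| :=
    calc 1 ≤ 2 * (q.1 + q.2 / s) - q.1 := by linarith [hx.1]
      _ ≤ |c| * (q.1 + q.2 / s) - q.1 := by gcongr; linarith [hx.1]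
      _ = |c * (q.1 + q.2 / s)| - |q.1| := by
        rw [abs_mul, abs_of_nonneg (by linarith [hx.1] : 0 ≤ q.1 + q.2 / s),
          abs_of_nonneg (by linarith [hx.1] : 0 ≤ q.1)]
      _ ≤ _ := abs_sub_abs_le_abs_sub _ _
  have := logisticLoss_self_add_le_of_one_le_abs_sub
    ⟨by linarith [hx.1], by linarith [hx.2]⟩ hfar
  unfold excessLoss
  linarith

lemma setIntegral_le_integral_excessLoss {c s : ℝ} {S : Set (ℝ × ℝ)} (hS : MeasurableSet S)
    {g : ℝ × ℝ → ℝ} (hg : IntegrableOn g S (Measure.prod γ γ))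
    (hgS : ∀ q ∈ S, g q ≤ excessLoss c s q) :
    ∫ q in S, g q ∂Measure.prod γ γ ≤ ∫ q, excessLoss c s q ∂Measure.prod γ γ :=
  (setIntegral_mono_on hg (integrable_excessLoss c s).integrableOn hS hgS).trans
    (setIntegral_le_integral (integrable_excessLoss c s) (ae_of_all _ (excessLoss_nonneg c s)))

lemma le_integral_excessLoss_of_abs_le_two {c s : ℝ} (hc : |c| ≤ 2) (hs : 1 ≤ s) :
    curvatureLowerBound / 2 * ((c - 1) ^ 2 + (c / s) ^ 2)
        * ((∫ x in Icc (-1) 1, x ^ 2 ∂γ) * Measure.real γ (Icc (-1) 1))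
      ≤ ∫ q, excessLoss c s q ∂Measure.prod γ γ := by
  have hmean := integral_id_eq_zero_of_map_neg_eq (map_neg_restrict_gaussianReal_Icc 1)
  have hmoment :
      ∫ q in Icc (-1) 1 ×ˢ Icc (-1) 1, ((c - 1) * q.1 + c / s * q.2) ^ 2 ∂Measure.prod γ γ
        = ((c - 1) ^ 2 + (c / s) ^ 2)
          * ((∫ x in Icc (-1) 1, x ^ 2 ∂γ) * Measure.real γ (Icc (-1) 1)) := by
    rw [← Measure.prod_restrict, integral_prod_sq_add ((memLp_id_gaussianReal 2).restrict _)
      ((memLp_id_gaussianReal 2).restrict _) hmean, measureReal_restrict_apply_univ]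
    ring
  calc _ = ∫ q in Icc (-1) 1 ×ˢ Icc (-1) 1,
        curvatureLowerBound / 2 * ((c - 1) * q.1 + c / s * q.2) ^ 2 ∂Measure.prod γ γ := by
        rw [integral_const_mul, hmoment, mul_assoc]
    _ ≤ _ := setIntegral_le_integral_excessLoss (measurableSet_Icc.prod measurableSet_Icc)
        ((Continuous.continuousOn (by fun_prop)).integrableOn_compact
          (isCompact_Icc.prod isCompact_Icc)) fun q hq => mul_sq_le_excessLoss hc hs hq

lemma le_integral_excessLoss_of_two_lt_abs {c s : ℝ} (hc : 2 < |c|) (hs : 0 < s) :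
    curvatureLowerBound / 2 * (Measure.real γ (Icc 1 2) * Measure.real γ (Icc 0 1))
      ≤ ∫ q, excessLoss c s q ∂Measure.prod γ γ :=
  calc _ = ∫ _ in Icc (1 : ℝ) 2 ×ˢ Icc (0 : ℝ) 1, curvatureLowerBound / 2 ∂Measure.prod γ γ := by
        rw [setIntegral_const, measureReal_prod_prod, smul_eq_mul, mul_comm]
    _ ≤ _ := setIntegral_le_integral_excessLoss (measurableSet_Icc.prod measurableSet_Icc)
        (integrableOn_const (measure_ne_top _ _)) fun q hq => div_two_le_excessLoss hc hs hq

lemma inv_sq_add_one_le (c : ℝ) {s : ℝ} (hs : s ≠ 0) :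
    (s ^ 2 + 1)⁻¹ ≤ (c - 1) ^ 2 + (c / s) ^ 2 := by
  have key : (c - 1) ^ 2 + (c / s) ^ 2 - (s ^ 2 + 1)⁻¹
      = ((s ^ 2 + 1) * c - s ^ 2) ^ 2 / (s ^ 2 * (s ^ 2 + 1)) := by
    field_simp
    ring
  linarith [div_nonneg (sq_nonneg ((s ^ 2 + 1) * c - s ^ 2))
    (by positivity : 0 ≤ s ^ 2 * (s ^ 2 + 1))]

lemma exists_pos_div_le_integral_excessLoss :
    ∃ C > 0, ∀ c s : ℝ, 1 ≤ s → C / (s ^ 2 + 1) ≤ ∫ q, excessLoss c s q ∂Measure.prod γ γ := by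
  set A := (∫ x in Icc (-1) 1, x ^ 2 ∂γ) * Measure.real γ (Icc (-1) 1)
  set B := Measure.real γ (Icc 1 2) * Measure.real γ (Icc 0 1)
  have hA : 0 < A := mul_pos setIntegral_sq_gaussianReal_pos
    (measureReal_gaussianReal_Icc_pos (by norm_num))
  have hB : 0 < B := mul_pos (measureReal_gaussianReal_Icc_pos (by norm_num))
    (measureReal_gaussianReal_Icc_pos (by norm_num))
  have hκ := curvatureLowerBound_pos
  refine ⟨curvatureLowerBound / 2 * min A B, by positivity, fun c s hs => ?_⟩
  rcases le_or_gt |c| 2 with hc | hc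
  · refine le_trans ?_ (le_integral_excessLoss_of_abs_le_two hc hs)
    calc curvatureLowerBound / 2 * min A B / (s ^ 2 + 1)
        = curvatureLowerBound / 2 * (s ^ 2 + 1)⁻¹ * min A B := by ring
      _ ≤ curvatureLowerBound / 2 * ((c - 1) ^ 2 + (c / s) ^ 2) * A := by
        gcongr
        · exact inv_sq_add_one_le c (by positivity)
        · exact min_le_left A B
  · refine le_trans ?_ (le_integral_excessLoss_of_two_lt_abs hc (by positivity))
    calc curvatureLowerBound / 2 * min A B / (s ^ 2 + 1) ≤ curvatureLowerBound / 2 * min A B :=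
          div_le_self (by positivity) (by nlinarith)
      _ ≤ curvatureLowerBound / 2 * B := by gcongr; exact min_le_right A B

/-- Lower bound on convergence: there is a universal constant `C > 0` such that for
independent standard Gaussians `Z, ξ` with label `y | Z ~ Bernoulli(σ(Z))` (Bayes-optimal
logit `Z`), and any `p ≥ 1`, the minimizer `ẑ = ĉ(Z + ξ/√p)` of the expected BCE loss over
logits of the form `c(Z + ξ/√p)` has excess loss `L(ẑ) − L(Z) ≥ C/(p+1)`. -/
theorem lower_bound_on_convergence :
    ∃ C : ℝ, 0 < C ∧
      ∀ (Ω : Type) [MeasurableSpace Ω] (P : Measure Ω) [IsProbabilityMeasure P]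
        (Z ξ : Ω → ℝ),
        Measure.map Z P = gaussianReal 0 1 →
        Measure.map ξ P = gaussianReal 0 1 →
        IndepFun Z ξ P →
        ∀ p : ℕ, 1 ≤ p →
        ∀ chat : ℝ,
          (∀ c : ℝ,
            softLoss P Z (fun ω => chat * (Z ω + ξ ω / Real.sqrt p))
              ≤ softLoss P Z (fun ω => c * (Z ω + ξ ω / Real.sqrt p))) →
          C / (p + 1)
            ≤ softLoss P Z (fun ω => chat * (Z ω + ξ ω / Real.sqrt p)) - softLoss P Z Z := by
  obtain ⟨C, hC, hbound⟩ := exists_pos_div_le_integral_excessLoss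
  refine ⟨C, hC, fun Ω _ P _ Z ξ hZ hξ hZξ p hp chat _ => ?_⟩
  have hlaw {X : Ω → ℝ} (hX : P.map X = γ) : HasLaw X γ P :=
    ⟨.of_map_ne_zero (hX ▸ IsProbabilityMeasure.ne_zero _), hX⟩
  rw [softLoss_sub_softLoss_eq_integral_excessLoss (hlaw hZ) (hlaw hξ) hZξ]
  simpa [Real.sq_sqrt (Nat.cast_nonneg p)] using
    hbound chat (Real.sqrt p) (Real.one_le_sqrt.2 (by exact_mod_cast hp))
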